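/- Let R be a commutative ring of prime characteristic p and 𝔞 an ideal of R generated by m elements. Then for every power q of p and every integer k with 0 ≤ k < q, one has 𝔞^{(m−1)(q−1)/(p−1)} · 𝔞^k = 𝔞^{(m−1)(q−1)/(p−1)} · 𝔞^[k], where 𝔞^[k] denotes the generalized Frobenius power. -/

import Mathlib

open scoped BigOperators

/-- The `q`-th bracket power of an ideal: the ideal generated by `q`-th powers
of elements of `a`. -/
def bracketPow {R : Type*} [CommRing R] (a : Ideal R) (q : ℕ) : Ideal R :=
  Ideal.span ((fun x => x ^ q) '' (a : Set R))

/-- The generalized `k`-th Frobenius power of an ideal, defined via the base-`p`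
digits of `k`:  `𝔞^[k] = ∏ᵢ (𝔞^[pⁱ])^(kᵢ)` where `kᵢ = k / pⁱ % p` is the `i`-th
base-`p` digit of `k` (digits with index `> k` vanish, so the product below suffices). -/
def frobPow {R : Type*} [CommRing R] (p : ℕ) (a : Ideal R) (k : ℕ) : Ideal R :=
  ∏ i ∈ Finset.range (k + 1), bracketPow a (p ^ i) ^ (k / p ^ i % p)

/-!
By pigeonhole, a product of `d + q` of the `m` generators of `𝔞`, with `d ≥ (m - 1)(q - 1)`,
repeats some generator at least `q` times; hence `𝔞^(d+q) ⊆ 𝔞^[q] 𝔞^d` and so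
`𝔞^d 𝔞^q = 𝔞^d 𝔞^[q]`. Write `𝔞^k = ∏ᵢ (𝔞^(pⁱ))^(kᵢ)` with the base-`p` digits `kᵢ` of `k < p^e`
and split `𝔞^((m-1)(1 + p + ⋯ + p^(e-1)))` as `∏ᵢ 𝔞^((m-1)pⁱ)`. As `(m - 1)pⁱ ≥ (m - 1)(pⁱ - 1)`,
the `i`-th factor absorbs the exchange of `(𝔞^(pⁱ))^(kᵢ)` for `(𝔞^[pⁱ])^(kᵢ)`.
-/

open Finset Ideal

section CommMonoid

variable {M : Type*} [CommMonoid M]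

theorem mul_pow_eq_mul_pow_of_mul_eq {x y z : M} (h : x * y = x * z) (t : ℕ) :
    x * y ^ t = x * z ^ t := by
  induction t with
  | zero => simp
  | succ t ih =>
    rw [pow_succ, pow_succ, ← mul_assoc, ← mul_assoc, ih, mul_right_comm, h, mul_right_comm]

theorem Finset.prod_mul_prod_congr_of_mul_eq {ι : Type*} (s : Finset ι) {x y z : ι → M}
    (h : ∀ i ∈ s, x i * y i = x i * z i) :
    (∏ i ∈ s, x i) * ∏ i ∈ s, y i = (∏ i ∈ s, x i) * ∏ i ∈ s, z i := by
  rw [← prod_mul_distrib, ← prod_mul_distrib]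
  exact prod_congr rfl h

theorem Nat.sum_range_div_pow_mod_mul_pow (p k n : ℕ) :
    ∑ i ∈ range n, k / p ^ i % p * p ^ i = k % p ^ n := by
  induction n with
  | zero => simp [Nat.mod_one]
  | succ n ih => rw [sum_range_succ, ih, Nat.mod_pow_succ, Nat.mul_comm]

theorem pow_eq_prod_range_pow_digit (x : M) {p k n : ℕ} (hk : k < p ^ n) :
    x ^ k = ∏ i ∈ range n, (x ^ p ^ i) ^ (k / p ^ i % p) := by
  simp_rw [← pow_mul, prod_pow_eq_pow_sum, Nat.mul_comm (p ^ _),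
    Nat.sum_range_div_pow_mod_mul_pow, Nat.mod_eq_of_lt hk]

end CommMonoid

namespace Ideal

variable {R : Type*} [CommRing R] {ι : Type*}

theorem span_range_pow_le_of_forall_prod_mem (g : ι → R) {J : Ideal R} {N : ℕ}
    (h : ∀ F : Fin N → ι, ∏ i, g (F i) ∈ J) : span (Set.range g) ^ N ≤ J := by
  rw [Submodule.span_pow, span_le]
  rintro x hx
  obtain ⟨f, rfl⟩ := Set.mem_pow.mp hx
  choose F hF using fun i => (f i).2
  rw [List.prod_ofFn, SetLike.mem_coe, ← funext hF]
  exact h F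

theorem prod_mem_span_pow_mul_pow [Fintype ι] [DecidableEq ι] (g : ι → R) {q d : ℕ}
    (hq : 1 ≤ q) (hd : (Fintype.card ι - 1) * (q - 1) ≤ d) (F : Fin (d + q) → ι) :
    ∏ i, g (F i) ∈ span (Set.range (g · ^ q)) * span (Set.range g) ^ d := by
  have hcard : Fintype.card ι * (q - 1) < Fintype.card (Fin (d + q)) := by
    rw [Fintype.card_fin]
    rcases Nat.eq_zero_or_pos (Fintype.card ι) with h | h
    · rw [h]; omega
    · obtain ⟨m, hm⟩ := Nat.exists_eq_add_of_lt h
      rw [hm, Nat.add_sub_cancel] at hd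
      rw [hm, Nat.add_mul]; omega
  obtain ⟨j, hj⟩ := Fintype.exists_lt_card_fiber_of_mul_lt_card F hcard
  have hsplit : #{i | F i = j} - q + #{i | ¬F i = j} = d := by
    have := card_filter_add_card_filter_not (s := univ) (fun i => F i = j)
    rw [card_univ, Fintype.card_fin] at this
    omega
  have hfiber : ∏ i with F i = j, g (F i) = g j ^ q * g j ^ (#{i | F i = j} - q) := by
    rw [prod_eq_pow_card fun i hi => by rw [(mem_filter.mp hi).2], ← pow_add]
    congr 1; omega
  have hrest : ∏ i with ¬F i = j, g (F i) ∈ span (Set.range g) ^ #{i | ¬F i = j} := by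
    simpa using prod_mem_prod (I := fun _ => span (Set.range g)) fun i _ => subset_span ⟨F i, rfl⟩
  have hcofactor : g j ^ (#{i | F i = j} - q) * ∏ i with ¬F i = j, g (F i) ∈
      span (Set.range g) ^ d := by
    have hgj : g j ∈ span (Set.range g) := subset_span ⟨j, rfl⟩
    have := mul_mem_mul (pow_mem_pow hgj (#{i | F i = j} - q)) hrest
    rwa [← pow_add, hsplit] at this
  rw [← prod_filter_mul_prod_filter_not univ (fun i => F i = j), hfiber, mul_assoc]
  exact mul_mem_mul (subset_span ⟨j, rfl⟩) hcofactor

theorem span_range_pow_add_le [Fintype ι] (g : ι → R) {q d : ℕ} (hq : 1 ≤ q)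
    (hd : (Fintype.card ι - 1) * (q - 1) ≤ d) :
    span (Set.range g) ^ (d + q) ≤ span (Set.range (g · ^ q)) * span (Set.range g) ^ d := by
  classical
  exact span_range_pow_le_of_forall_prod_mem g (prod_mem_span_pow_mul_pow g hq hd)

theorem span_range_pow_le_bracketPow (g : ι → R) (q : ℕ) :
    span (Set.range (g · ^ q)) ≤ bracketPow (span (Set.range g)) q :=
  span_le.mpr <| Set.range_subset_iff.mpr fun j =>
    subset_span ⟨g j, subset_span ⟨j, rfl⟩, rfl⟩

theorem bracketPow_le_pow (a : Ideal R) (q : ℕ) : bracketPow a q ≤ a ^ q :=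
  span_le.mpr <| Set.image_subset_iff.mpr fun _ hx => pow_mem_pow hx q

theorem pow_mul_pow_eq_pow_mul_bracketPow [Fintype ι] (g : ι → R) {q c : ℕ} (hq : 1 ≤ q)
    (hc : (Fintype.card ι - 1) * (q - 1) ≤ c) :
    span (Set.range g) ^ c * span (Set.range g) ^ q =
      span (Set.range g) ^ c * bracketPow (span (Set.range g)) q := by
  refine le_antisymm ?_ (mul_mono_right (bracketPow_le_pow _ q))
  calc span (Set.range g) ^ c * span (Set.range g) ^ q
        ≤ span (Set.range (g · ^ q)) * span (Set.range g) ^ c := by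
          rw [← pow_add]; exact span_range_pow_add_le g hq hc
    _ ≤ bracketPow (span (Set.range g)) q * span (Set.range g) ^ c :=
        mul_mono_left (span_range_pow_le_bracketPow g q)
    _ = span (Set.range g) ^ c * bracketPow (span (Set.range g)) q := mul_comm _ _

end Ideal

theorem frobPow_eq_prod_range {R : Type*} [CommRing R] {p : ℕ} (hp : 2 ≤ p) (a : Ideal R)
    {k n : ℕ} (hk : k < p ^ n) :
    frobPow p a k = ∏ i ∈ range n, bracketPow a (p ^ i) ^ (k / p ^ i % p) := by
  have hdigit : ∀ {n N : ℕ}, k < p ^ n → n ≤ N →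
      ∏ i ∈ range N, bracketPow a (p ^ i) ^ (k / p ^ i % p) =
        ∏ i ∈ range n, bracketPow a (p ^ i) ^ (k / p ^ i % p) := fun hkn hnN =>
    (prod_subset (range_subset_range.mpr hnN) fun i _ hi => by
      have : k < p ^ i := hkn.trans_le (Nat.pow_le_pow_right (by omega) (by simpa using hi))
      rw [Nat.div_eq_of_lt this, Nat.zero_mod, pow_zero]).symm
  have hk' : k < p ^ (k + 1) := Nat.lt_pow_self (by omega) |>.trans
    (Nat.pow_lt_pow_right (by omega) k.lt_succ_self)
  rw [frobPow]
  rcases le_total (k + 1) n with h | h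
  · exact (hdigit hk' h).symm
  · exact hdigit hk h

-- `∑ i ∈ range e, p ^ i` is `(q - 1) / (p - 1)` for `q = p ^ e`.
theorem stmt_11_general {R : Type*} [CommRing R] (p : ℕ) (hp : p.Prime)
    (m : ℕ) (a : Ideal R) (g : Fin m → R) (hg : a = Ideal.span (Set.range g))
    (e k : ℕ) (hk : k < p ^ e) :
    a ^ ((m - 1) * ∑ i ∈ Finset.range e, p ^ i) * a ^ k =
      a ^ ((m - 1) * ∑ i ∈ Finset.range e, p ^ i) * frobPow p a k := by
  subst hg
  have hfactor (i : ℕ) (t : ℕ) :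
      span (Set.range g) ^ ((m - 1) * p ^ i) * (span (Set.range g) ^ p ^ i) ^ t =
        span (Set.range g) ^ ((m - 1) * p ^ i) * bracketPow (span (Set.range g)) (p ^ i) ^ t :=
    mul_pow_eq_mul_pow_of_mul_eq (by
      simpa using pow_mul_pow_eq_pow_mul_bracketPow g (Nat.one_le_pow _ _ hp.pos)
        (Nat.mul_le_mul_left (Fintype.card (Fin m) - 1) (Nat.sub_le (p ^ i) 1))) t
  rw [frobPow_eq_prod_range hp.two_le _ hk, pow_eq_prod_range_pow_digit _ hk, mul_sum,
    ← prod_pow_eq_pow_sum]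
  exact prod_mul_prod_congr_of_mul_eq _ fun i _ => hfactor i _

/-- Here `∑_{i<e} pⁱ = (q−1)/(p−1)` for `q = p^e`. -/
theorem stmt_11 {R : Type*} [CommRing R] (p : ℕ) (hp : p.Prime) [CharP R p]
    (m : ℕ) (a : Ideal R) (g : Fin m → R) (hg : a = Ideal.span (Set.range g))
    (e k : ℕ) (hk : k < p ^ e) :
    a ^ ((m - 1) * ∑ i ∈ Finset.range e, p ^ i) * a ^ k =
      a ^ ((m - 1) * ∑ i ∈ Finset.range e, p ^ i) * frobPow p a k :=
  stmt_11_general p hp m a g hg e k hk
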